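/- (Theorem 1, convergence of repeated soft policy improvement) Suppose |r(s,a)| ≤ R for all (s,a). Let (π_i) be a sequence of policies and for each i let Q_i be the fixed point of the soft Bellman operator T^{π_i}, and suppose π_{i+1}(s)(a) = exp(Q_i(s,a)) / ∑_{a'} exp(Q_i(s,a')) for every i, s, a. Then for every (s,a) the sequence (Q_i(s,a)) is nondecreasing in i and bounded above by (R + γ·log(card A))/(1 − γ), and hence converges as i → ∞. -/

import Mathlib

/-!
The entropy-regularised value `∑ₐ (w a * f a + negMulLog (w a))` of a distribution `w` is at
most `log ∑ₐ exp (f a)`, with equality at the softmax of `f` (Gibbs' variational principle).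
Hence the softmax of `Qᵢ` improves the state values of `Qᵢ`, and comparing the two fixed points
at a state-action pair where `Qᵢ₊₁ - Qᵢ` is minimal shows that this minimum `m` satisfies
`m ≥ γ m`, so `Qᵢ ≤ Qᵢ₊₁`. At a maximiser of `Qᵢ` the same Gibbs bound gives
`max Qᵢ ≤ R + γ (max Qᵢ + log |A|)`. A bounded monotone real sequence converges.
-/

open Real Finset Filter

variable {S A : Type*}

/-- The soft Bellman operator `T^pol` of `(r, p, γ, pol)`. -/
noncomputable def softBellman [Fintype S] [Fintype A]
    (r : S × A → ℝ) (p : S × A → S → ℝ) (γ : ℝ) (pol : S → A → ℝ)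
    (Q : S × A → ℝ) : S × A → ℝ :=
  fun sa => r sa + γ * ∑ s' : S, p sa s' *
    ∑ a' : A, (pol s' a' * Q (s', a') + Real.negMulLog (pol s' a'))

section Simplex

variable {ι : Type*} [Fintype ι] {w : ι → ℝ}

lemma nonempty_of_mem_stdSimplex (hw : w ∈ stdSimplex ℝ ι) : Nonempty ι := by
  obtain ⟨i, -, -⟩ := Finset.exists_ne_zero_of_sum_ne_zero (hw.2 ▸ one_ne_zero)
  exact ⟨i⟩

lemma sum_mul_le_of_mem_stdSimplex (hw : w ∈ stdSimplex ℝ ι) {f : ι → ℝ} {c : ℝ}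
    (hf : ∀ i, f i ≤ c) : ∑ i, w i * f i ≤ c :=
  calc ∑ i, w i * f i ≤ ∑ i, w i * c :=
        sum_le_sum fun i _ => mul_le_mul_of_nonneg_left (hf i) (hw.1 i)
    _ = c := by rw [← sum_mul, hw.2, one_mul]

lemma le_sum_mul_of_mem_stdSimplex (hw : w ∈ stdSimplex ℝ ι) {f : ι → ℝ} {c : ℝ}
    (hf : ∀ i, c ≤ f i) : c ≤ ∑ i, w i * f i :=
  calc c = ∑ i, w i * c := by rw [← sum_mul, hw.2, one_mul]
    _ ≤ ∑ i, w i * f i :=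
        sum_le_sum fun i _ => mul_le_mul_of_nonneg_left (hf i) (hw.1 i)

end Simplex

lemma mul_log_add_negMulLog_le {w q : ℝ} (hw : 0 ≤ w) (hq : 0 < q) :
    w * log q + negMulLog w ≤ q - w := by
  rcases hw.eq_or_lt with rfl | hw
  · simpa using hq.le
  have hlog : log (q / w) ≤ q / w - 1 := log_le_sub_one_of_pos (div_pos hq hw)
  calc w * log q + negMulLog w = w * log (q / w) := by
        rw [log_div hq.ne' hw.ne', negMulLog]; ring
    _ ≤ w * (q / w - 1) := mul_le_mul_of_nonneg_left hlog hw.le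
    _ = q - w := by field_simp

section SoftValue

variable [Fintype A]

noncomputable def softValue (w f : A → ℝ) : ℝ :=
  ∑ a, (w a * f a + negMulLog (w a))

noncomputable def softmax (f : A → ℝ) (a : A) : ℝ :=
  exp (f a) / ∑ a', exp (f a')

lemma sum_softmax [Nonempty A] (f : A → ℝ) : ∑ a, softmax f a = 1 := by
  simp only [softmax, ← sum_div]
  exact div_self (sum_pos (fun a _ => exp_pos _) univ_nonempty).ne'

lemma softValue_sub_softValue (w f g : A → ℝ) :
    softValue w f - softValue w g = ∑ a, w a * (f a - g a) := by
  simp only [softValue, ← sum_sub_distrib]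
  exact sum_congr rfl fun a _ => by ring

lemma softValue_le_log_sum_exp {w : A → ℝ} (hw : w ∈ stdSimplex ℝ A) (f : A → ℝ) :
    softValue w f ≤ log (∑ a, exp (f a)) := by
  have := nonempty_of_mem_stdSimplex hw
  set Z := ∑ a, exp (f a)
  have hZ : 0 < Z := sum_pos (fun a _ => exp_pos _) univ_nonempty
  have hterm : ∀ a, w a * f a + negMulLog (w a) ≤ w a * log Z + (softmax f a - w a) := by
    intro a
    have hsplit : f a = log Z + log (softmax f a) := by
      rw [softmax, log_div (exp_ne_zero _) hZ.ne', log_exp]; ring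
    have := mul_log_add_negMulLog_le (q := softmax f a) (hw.1 a) (div_pos (exp_pos (f a)) hZ)
    rw [hsplit]
    linarith
  calc softValue w f ≤ ∑ a, (w a * log Z + (softmax f a - w a)) := sum_le_sum fun a _ => hterm a
    _ = log Z := by
        rw [sum_add_distrib, sum_sub_distrib, ← sum_mul, hw.2, sum_softmax]; ring

lemma softValue_softmax [Nonempty A] (f : A → ℝ) :
    softValue (softmax f) f = log (∑ a, exp (f a)) := by
  set Z := ∑ a, exp (f a)
  have hZ : 0 < Z := sum_pos (fun a _ => exp_pos _) univ_nonempty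
  have hterm : ∀ a, softmax f a * f a + negMulLog (softmax f a) = softmax f a * log Z := by
    intro a
    rw [negMulLog, softmax, log_div (exp_ne_zero _) hZ.ne', log_exp]; ring
  rw [softValue, sum_congr rfl fun a _ => hterm a, ← sum_mul, sum_softmax, one_mul]

lemma softValue_le_softValue_softmax {w : A → ℝ} (hw : w ∈ stdSimplex ℝ A) (f : A → ℝ) :
    softValue w f ≤ softValue (softmax f) f :=
  have := nonempty_of_mem_stdSimplex hw
  (softValue_softmax f).symm ▸ softValue_le_log_sum_exp hw f

lemma log_sum_exp_le_add_log_card [Nonempty A] {f : A → ℝ} {c : ℝ} (hf : ∀ a, f a ≤ c) :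
    log (∑ a, exp (f a)) ≤ c + log (Fintype.card A) := by
  have hsum : ∑ a, exp (f a) ≤ Fintype.card A * exp c := by
    simpa using sum_le_sum fun a (_ : a ∈ univ) => exp_le_exp.2 (hf a)
  calc log (∑ a, exp (f a)) ≤ log (Fintype.card A * exp c) :=
        log_le_log (sum_pos (fun a _ => exp_pos _) univ_nonempty) hsum
    _ = c + log (Fintype.card A) := by
        rw [log_mul (by positivity) (exp_ne_zero c), log_exp, add_comm]

lemma softValue_le_add_log_card {w : A → ℝ} (hw : w ∈ stdSimplex ℝ A) {f : A → ℝ} {c : ℝ}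
    (hf : ∀ a, f a ≤ c) : softValue w f ≤ c + log (Fintype.card A) :=
  have := nonempty_of_mem_stdSimplex hw
  (softValue_le_log_sum_exp hw f).trans (log_sum_exp_le_add_log_card hf)

end SoftValue

section Bellman

variable [Fintype S] [Fintype A] {r : S × A → ℝ} {p : S × A → S → ℝ} {γ : ℝ}

lemma softBellman_apply (pol : S → A → ℝ) (Q : S × A → ℝ) (sa : S × A) :
    softBellman r p γ pol Q sa =
      r sa + γ * ∑ s', p sa s' * softValue (pol s') fun a => Q (s', a) :=
  rfl

lemma softBellman_sub_softBellman (pol pol' : S → A → ℝ) (Q Q' : S × A → ℝ) (sa : S × A) :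
    softBellman r p γ pol' Q' sa - softBellman r p γ pol Q sa =
      γ * ∑ s', p sa s' * ((softValue (pol' s') fun a => Q' (s', a)) -
        softValue (pol s') fun a => Q (s', a)) := by
  simp only [softBellman_apply, mul_sub, sum_sub_distrib]
  ring

lemma le_of_softBellman_fixedPoint (hp : ∀ sa, p sa ∈ stdSimplex ℝ S) (hγ0 : 0 ≤ γ)
    (hγ1 : γ < 1) {pol pol' : S → A → ℝ} (hpol' : ∀ s, pol' s ∈ stdSimplex ℝ A)
    {Q Q' : S × A → ℝ} (hQ : softBellman r p γ pol Q = Q) (hQ' : softBellman r p γ pol' Q' = Q')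
    (himp : ∀ s, (softValue (pol s) fun a => Q (s, a)) ≤ softValue (pol' s) fun a => Q (s, a)) :
    Q ≤ Q' := by
  intro sa
  have : Nonempty (S × A) := ⟨sa⟩
  obtain ⟨sa₀, hmin⟩ := Finite.exists_min (Q' - Q)
  set m := (Q' - Q) sa₀
  have hV : ∀ s, m ≤
      (softValue (pol' s) fun a => Q' (s, a)) - softValue (pol s) fun a => Q (s, a) := by
    intro s
    have : m ≤
        (softValue (pol' s) fun a => Q' (s, a)) - softValue (pol' s) fun a => Q (s, a) := by
      rw [softValue_sub_softValue]
      exact le_sum_mul_of_mem_stdSimplex (hpol' s) fun a => hmin (s, a)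
    linarith [himp s]
  have hm : γ * m ≤ m :=
    calc γ * m ≤ γ * ∑ s', p sa₀ s' * ((softValue (pol' s') fun a => Q' (s', a)) -
          softValue (pol s') fun a => Q (s', a)) :=
        mul_le_mul_of_nonneg_left (le_sum_mul_of_mem_stdSimplex (hp sa₀) hV) hγ0
      _ = m := by rw [← softBellman_sub_softBellman, hQ, hQ']; rfl
  have hm0 : 0 ≤ m := by nlinarith
  exact sub_nonneg.1 (hm0.trans (hmin sa))

lemma softBellman_fixedPoint_le (hp : ∀ sa, p sa ∈ stdSimplex ℝ S) (hγ0 : 0 ≤ γ)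
    (hγ1 : γ < 1) {R : ℝ} (hr : ∀ sa, r sa ≤ R) {pol : S → A → ℝ}
    (hpol : ∀ s, pol s ∈ stdSimplex ℝ A) {Q : S × A → ℝ} (hQ : softBellman r p γ pol Q = Q)
    (sa : S × A) : Q sa ≤ (R + γ * log (Fintype.card A)) / (1 - γ) := by
  have : Nonempty (S × A) := ⟨sa⟩
  obtain ⟨sa₀, hmax⟩ := Finite.exists_max Q
  have hV : ∀ s, (softValue (pol s) fun a => Q (s, a)) ≤ Q sa₀ + log (Fintype.card A) :=
    fun s => softValue_le_add_log_card (hpol s) fun a => hmax (s, a)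
  have hQ₀ : Q sa₀ ≤ R + γ * (Q sa₀ + log (Fintype.card A)) :=
    calc Q sa₀ = softBellman r p γ pol Q sa₀ := (congrFun hQ sa₀).symm
      _ ≤ R + γ * (Q sa₀ + log (Fintype.card A)) :=
        add_le_add (hr sa₀) (mul_le_mul_of_nonneg_left
          (sum_mul_le_of_mem_stdSimplex (hp sa₀) hV) hγ0)
  rw [le_div_iff₀ (sub_pos.2 hγ1)]
  nlinarith [hmax sa]

end Bellman

theorem soft_policy_iteration_converges_general
    [Fintype S] [Fintype A]
    (p : S × A → S → ℝ) (hp0 : ∀ sa s', 0 ≤ p sa s') (hp1 : ∀ sa, ∑ s' : S, p sa s' = 1)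
    (r : S × A → ℝ) (γ : ℝ) (hγ0 : 0 ≤ γ) (hγ1 : γ < 1)
    (R : ℝ) (hr : ∀ sa, |r sa| ≤ R)
    (pol : ℕ → S → A → ℝ)
    (hpol0 : ∀ i s a, 0 ≤ pol i s a) (hpol1 : ∀ i s, ∑ a : A, pol i s a = 1)
    (Q : ℕ → S × A → ℝ)
    (hQ : ∀ i, softBellman r p γ (pol i) (Q i) = Q i)
    (hstep : ∀ i s a,
      pol (i + 1) s a = Real.exp (Q i (s, a)) / ∑ a' : A, Real.exp (Q i (s, a'))) :
    ∀ sa : S × A,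
      Monotone (fun i => Q i sa) ∧
      (∀ i, Q i sa ≤ (R + γ * Real.log (Fintype.card A)) / (1 - γ)) ∧
      ∃ L : ℝ, Tendsto (fun i => Q i sa) atTop (nhds L) := by
  have hp : ∀ sa, p sa ∈ stdSimplex ℝ S := fun sa => ⟨hp0 sa, hp1 sa⟩
  have hpol : ∀ i s, pol i s ∈ stdSimplex ℝ A := fun i s => ⟨hpol0 i s, hpol1 i s⟩
  have hmono : ∀ i, Q i ≤ Q (i + 1) := fun i =>
    le_of_softBellman_fixedPoint hp hγ0 hγ1 (hpol (i + 1)) (hQ i) (hQ (i + 1)) fun s => by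
      rw [show pol (i + 1) s = softmax fun a => Q i (s, a) from funext (hstep i s)]
      exact softValue_le_softValue_softmax (hpol i s) _
  have hbound : ∀ i sa, Q i sa ≤ (R + γ * log (Fintype.card A)) / (1 - γ) := fun i =>
    softBellman_fixedPoint_le hp hγ0 hγ1 (fun sa => le_of_abs_le (hr sa)) (hpol i) (hQ i)
  intro sa
  have hmono_sa : Monotone fun i => Q i sa := monotone_nat_of_le_succ fun i => hmono i sa
  exact ⟨hmono_sa, fun i => hbound i sa, _,
    tendsto_atTop_ciSup hmono_sa ⟨_, Set.forall_mem_range.2 fun i => hbound i sa⟩⟩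

/-- Theorem 1 (convergence of repeated soft policy improvement): along softmax policy
iteration, the soft Q-values are pointwise nondecreasing and bounded above by
`(R + γ log |A|)/(1 - γ)`, hence convergent. -/
theorem soft_policy_iteration_converges
    [Fintype S] [Fintype A] [Nonempty S] [Nonempty A]
    (p : S × A → S → ℝ) (hp0 : ∀ sa s', 0 ≤ p sa s') (hp1 : ∀ sa, ∑ s' : S, p sa s' = 1)
    (r : S × A → ℝ) (γ : ℝ) (hγ0 : 0 ≤ γ) (hγ1 : γ < 1)
    (R : ℝ) (hr : ∀ sa, |r sa| ≤ R)
    (pol : ℕ → S → A → ℝ)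
    (hpol0 : ∀ i s a, 0 ≤ pol i s a) (hpol1 : ∀ i s, ∑ a : A, pol i s a = 1)
    (Q : ℕ → S × A → ℝ)
    (hQ : ∀ i, softBellman r p γ (pol i) (Q i) = Q i)
    (hstep : ∀ i s a,
      pol (i + 1) s a = Real.exp (Q i (s, a)) / ∑ a' : A, Real.exp (Q i (s, a'))) :
    ∀ sa : S × A,
      Monotone (fun i => Q i sa) ∧
      (∀ i, Q i sa ≤ (R + γ * Real.log (Fintype.card A)) / (1 - γ)) ∧
      ∃ L : ℝ, Tendsto (fun i => Q i sa) atTop (nhds L) :=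
  soft_policy_iteration_converges_general p hp0 hp1 r γ hγ0 hγ1 R hr pol hpol0 hpol1 Q hQ hstep
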